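/- For all distinct primes p, q and all integers k, r, u, v ≥ 1, one has s(p^k·q^r) ~ s(p^u·q^v). In particular (taking one prime) s(p^k) ~ s(p^u) for all primes p and integers k, u ≥ 1. -/

import Mathlib

noncomputable section
set_option maxHeartbeats 1000000
open scoped TensorProduct

instance (p : Nat.Primes) : Fact (p : ℕ).Prime := ⟨p.2⟩

/-- The profinite integers `Ẑ = ∏_p ℤ_p`. -/
abbrev ZHat : Type := ∀ p : Nat.Primes, ℤ_[(p : ℕ)]

/-- The finite adele ring `𝔸_f = Ẑ ⊗ ℚ` of `ℚ`. -/
abbrev AF : Type := ZHat ⊗[ℤ] ℚ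

/-- The embedding `Ẑ ⊆ 𝔸_f`. -/
def iZ : ZHat →+* AF := Algebra.TensorProduct.includeLeftRingHom

/-- The diagonal embedding `ℚ ⊆ 𝔸_f`. -/
def iQ : ℚ →+* AF :=
  (Algebra.TensorProduct.includeRight (R := ℤ) (A := ZHat) (B := ℚ)).toRingHom

/-- The relation `z ~ z'` on `𝔸_f`: there are `a, b, c, d ∈ ℚ` with `ad − bc ≠ 0`,
`a + c·z` a unit of `𝔸_f`, and `(b + d·z)·(a + c·z)⁻¹ − z'` in the diagonal image
of `ℚ` (the partially defined `PGL₂(ℚ)`-action `z ↦ (b+dz)/(a+cz)`). -/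
def adeleRel (z z' : AF) : Prop :=
  ∃ a b c d : ℚ, a * d - b * c ≠ 0 ∧
    ∃ w : AF, (iQ a + iQ c * z) * w = 1 ∧
      ∃ q : ℚ, (iQ b + iQ d * z) * w - z' = iQ q

/-- The profinite integer `s(n)` whose `p`-th component is `p^{v_p(n)}`, the largest
power of `p` dividing `n` (with component `0` when `n = 0`). -/
def sFun (n : ℕ) : ZHat :=
  fun p => if n = 0 then 0 else ((p : ℕ) : ℤ_[(p : ℕ)]) ^ (n.factorization (p : ℕ))

/- Componentwise, `s(p^k q^r)` takes only the three distinct integer values `p^k`, `q^r`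
and `1`, and `s(p^u q^v)` takes `p^u`, `q^v`, `1` at the same places. A Möbius transformation
with integer coefficients sends any three distinct points to any three distinct points, and since
it acts componentwise on `Ẑ` it sends the first profinite integer to the second. Its denominator
`a + c·s` is invertible in `𝔸_f`: it annihilates a polynomial with nonzero integer constant
term, which becomes a unit once `ℚ` is adjoined. -/

open Polynomial

theorem exists_mobius_map_fin_three {R : Type*} [CommRing R] [IsDomain R] {x y : Fin 3 → R}
    (hx : Function.Injective x) (hy : Function.Injective y) :
    ∃ a b c d : R, a * d - b * c ≠ 0 ∧
      ∀ i, a + c * x i ≠ 0 ∧ b + d * x i = y i * (a + c * x i) := by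
  have sub_ne {f : Fin 3 → R} (hf : Function.Injective f) {i j : Fin 3} (hij : i ≠ j) :
      f i - f j ≠ 0 := sub_ne_zero.mpr (hf.ne hij)
  -- `y` solved from the cross-ratio identity `A (x - x₀) (y - y₂) = B (x - x₂) (y - y₀)`.
  set A := (x 1 - x 2) * (y 1 - y 0) with hA_def
  set B := (y 1 - y 2) * (x 1 - x 0) with hB_def
  have hA : A ≠ 0 := mul_ne_zero (sub_ne hx (by decide)) (sub_ne hy (by decide))
  have hB : B ≠ 0 := mul_ne_zero (sub_ne hy (by decide)) (sub_ne hx (by decide))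
  refine ⟨B * x 2 - A * x 0, B * y 0 * x 2 - A * y 2 * x 0, A - B, A * y 2 - B * y 0, ?_, ?_⟩
  · have hdet : (B * x 2 - A * x 0) * (A * y 2 - B * y 0) - (B * y 0 * x 2 - A * y 2 * x 0) * (A - B)
        = A * B * (y 0 - y 2) * (x 0 - x 2) := by ring
    rw [hdet]
    exact mul_ne_zero (mul_ne_zero (mul_ne_zero hA hB) (sub_ne hy (by decide)))
      (sub_ne hx (by decide))
  · intro i
    fin_cases i <;> simp only [Fin.zero_eta, Fin.mk_one, Fin.reduceFinMk]
    · refine ⟨?_, by ring⟩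
      have : B * x 2 - A * x 0 + (A - B) * x 0 = B * (x 2 - x 0) := by ring
      exact this ▸ mul_ne_zero hB (sub_ne hx (by decide))
    · refine ⟨?_, by rw [hA_def, hB_def]; ring⟩
      have : B * x 2 - A * x 0 + (A - B) * x 1 = (x 1 - x 0) * (x 1 - x 2) * (y 2 - y 0) := by
        rw [hA_def, hB_def]; ring
      exact this ▸ mul_ne_zero (mul_ne_zero (sub_ne hx (by decide)) (sub_ne hx (by decide)))
        (sub_ne hy (by decide))
    · refine ⟨?_, by ring⟩
      have : B * x 2 - A * x 0 + (A - B) * x 2 = A * (x 2 - x 0) := by ring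
      exact this ▸ mul_ne_zero hA (sub_ne hx (by decide))

theorem isUnit_of_prod_sub_eq_zero {A ι : Type*} [CommRing A] {s : Finset ι} {y : ι → A}
    {t : A} (ht : ∏ i ∈ s, (t - y i) = 0) (hy : ∀ i ∈ s, IsUnit (y i)) : IsUnit t := by
  have hdvd := sub_dvd_eval_sub t 0 (∏ i ∈ s, (X - C (y i)))
  simp only [eval_prod, eval_sub, eval_X, eval_C, ht, sub_zero, zero_sub] at hdvd
  exact isUnit_of_dvd_unit hdvd (IsUnit.prod_iff.mpr fun i hi => (hy i hi).neg).neg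

theorem isUnit_intCast_adele {n : ℤ} (hn : n ≠ 0) : IsUnit (n : AF) := by
  rw [← map_intCast iQ]
  exact (isUnit_iff_ne_zero.mpr (Int.cast_ne_zero.mpr hn)).map iQ

theorem adeleRel_of_isUnit {z z' : AF} {a b c d : ℚ} (hdet : a * d - b * c ≠ 0)
    (hunit : IsUnit (iQ a + iQ c * z)) (h : iQ b + iQ d * z = z' * (iQ a + iQ c * z)) :
    adeleRel z z' := by
  obtain ⟨u, hu⟩ := hunit
  refine ⟨a, b, c, d, hdet, ↑u⁻¹, by rw [← hu, Units.mul_inv], 0, ?_⟩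
  rw [h, ← hu, mul_assoc, Units.mul_inv, mul_one, sub_self, map_zero]

theorem adeleRel_iZ_of_mobius {n : ℕ} {x y : Fin n → ℤ} {s s' : ZHat}
    (hval : ∀ ℓ, ∃ i, s ℓ = x i ∧ s' ℓ = y i) {a b c d : ℤ} (hdet : a * d - b * c ≠ 0)
    (hden : ∀ i, a + c * x i ≠ 0) (hmap : ∀ i, b + d * x i = y i * (a + c * x i)) :
    adeleRel (iZ s) (iZ s') := by
  have hrel : (b : ZHat) + d * s = s' * (a + c * s) := by
    funext ℓ
    obtain ⟨i, hs, hs'⟩ := hval ℓ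
    simp only [Pi.add_apply, Pi.mul_apply, Pi.intCast_apply, hs, hs']
    exact_mod_cast hmap i
  have hroot : ∏ i, ((a : ZHat) + c * s - ((a + c * x i : ℤ) : ZHat)) = 0 := by
    funext ℓ
    obtain ⟨i, hs, -⟩ := hval ℓ
    rw [Finset.prod_apply, Pi.zero_apply]
    exact Finset.prod_eq_zero (Finset.mem_univ i) (by simp [hs])
  have hunit : IsUnit (iZ (a + c * s)) := by
    refine isUnit_of_prod_sub_eq_zero (s := Finset.univ) (y := fun i => ((a + c * x i : ℤ) : AF))
      ?_ fun i _ => isUnit_intCast_adele (hden i)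
    simpa using congrArg iZ hroot
  refine adeleRel_of_isUnit (a := a) (b := b) (c := c) (d := d) (by exact_mod_cast hdet) ?_ ?_
  · simpa using hunit
  · simpa using congrArg iZ hrel

theorem adeleRel_iZ_of_forall_eq_fin_three {x y : Fin 3 → ℤ} (hx : Function.Injective x)
    (hy : Function.Injective y) {s s' : ZHat} (hval : ∀ ℓ, ∃ i, s ℓ = x i ∧ s' ℓ = y i) :
    adeleRel (iZ s) (iZ s') := by
  obtain ⟨a, b, c, d, hdet, h⟩ := exists_mobius_map_fin_three hx hy
  exact adeleRel_iZ_of_mobius hval hdet (fun i => (h i).1) (fun i => (h i).2)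

theorem sFun_mul {m n : ℕ} (hm : m ≠ 0) (hn : n ≠ 0) : sFun (m * n) = sFun m * sFun n := by
  funext ℓ
  simp only [sFun, Pi.mul_apply, mul_ne_zero hm hn, hm, hn, if_false,
    Nat.factorization_mul hm hn, Finsupp.add_apply, pow_add]

theorem sFun_prime_pow_apply {p : ℕ} (hp : p.Prime) (k : ℕ) (ℓ : Nat.Primes) :
    sFun (p ^ k) ℓ = if (ℓ : ℕ) = p then (((p ^ k : ℕ) : ℤ) : ℤ_[(ℓ : ℕ)]) else 1 := by
  obtain ⟨ℓ, -⟩ := ℓ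
  unfold sFun
  rw [if_neg (pow_ne_zero k hp.ne_zero), hp.factorization_pow, Finsupp.single_apply]
  by_cases h : ℓ = p
  · subst h
    simp
  · simp [h, Ne.symm h]

theorem injective_vecCons_prime_pow {p q : ℕ} (hp : p.Prime) (hq : q.Prime) (hpq : p ≠ q)
    {k r : ℕ} (hk : k ≠ 0) (hr : r ≠ 0) :
    Function.Injective ![((p ^ k : ℕ) : ℤ), ((q ^ r : ℕ) : ℤ), 1] := by
  have hpk : ((p ^ k : ℕ) : ℤ) ≠ 1 := by exact_mod_cast (Nat.one_lt_pow hk hp.one_lt).ne'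
  have hqr : ((q ^ r : ℕ) : ℤ) ≠ 1 := by exact_mod_cast (Nat.one_lt_pow hr hq.one_lt).ne'
  have hpkqr : ((p ^ k : ℕ) : ℤ) ≠ (q ^ r : ℕ) := fun h =>
    hpq (hp.pow_inj' hq hk hr (Nat.cast_injective h)).1
  intro i j h
  fin_cases i <;> fin_cases j <;> simp_all [eq_comm]
/-- for distinct primes `p, q` and integers `k, r, u, v ≥ 1` one has
`s(p^k·q^r) ~ s(p^u·q^v)`; in particular `s(p^k) ~ s(p^u)` for every prime `p` and
integers `k, u ≥ 1`. -/
theorem rel_sFun_two_primes :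
    (∀ p q : ℕ, p.Prime → q.Prime → p ≠ q → ∀ k r u v : ℕ,
      1 ≤ k → 1 ≤ r → 1 ≤ u → 1 ≤ v →
        adeleRel (iZ (sFun (p ^ k * q ^ r))) (iZ (sFun (p ^ u * q ^ v)))) ∧
    (∀ p : ℕ, p.Prime → ∀ k u : ℕ, 1 ≤ k → 1 ≤ u →
      adeleRel (iZ (sFun (p ^ k))) (iZ (sFun (p ^ u)))) := by
  constructor
  · intro p q hp hq hpq k r u v hk hr hu hv
    refine adeleRel_iZ_of_forall_eq_fin_three
      (injective_vecCons_prime_pow hp hq hpq (Nat.one_le_iff_ne_zero.mp hk)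
        (Nat.one_le_iff_ne_zero.mp hr))
      (injective_vecCons_prime_pow hp hq hpq (Nat.one_le_iff_ne_zero.mp hu)
        (Nat.one_le_iff_ne_zero.mp hv)) fun ℓ => ?_
    simp only [sFun_mul (pow_ne_zero _ hp.ne_zero) (pow_ne_zero _ hq.ne_zero), Pi.mul_apply,
      sFun_prime_pow_apply hp, sFun_prime_pow_apply hq]
    by_cases hℓp : (ℓ : ℕ) = p
    · exact ⟨0, by simp [hℓp, hpq]⟩
    by_cases hℓq : (ℓ : ℕ) = q
    · exact ⟨1, by simp [hℓq, hpq.symm]⟩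
    · exact ⟨2, by simp [hℓp, hℓq]⟩
  · intro p hp k u hk hu
    -- Any prime `q ≠ p` supplies a third point of the table that `s(p^k)` never takes.
    obtain ⟨q, hpq, hq⟩ := Nat.exists_infinite_primes (p + 1)
    refine adeleRel_iZ_of_forall_eq_fin_three
      (injective_vecCons_prime_pow hp hq (by omega) (Nat.one_le_iff_ne_zero.mp hk) one_ne_zero)
      (injective_vecCons_prime_pow hp hq (by omega) (Nat.one_le_iff_ne_zero.mp hu) one_ne_zero)
      fun ℓ => ?_
    rw [sFun_prime_pow_apply hp, sFun_prime_pow_apply hp]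
    split_ifs
    exacts [⟨0, by simp⟩, ⟨2, by simp⟩]
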